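/- arXiv:1612.00374 — 2 statements merged into one kernel-verified Lean document; each statement's English description precedes it below -/
import Mathlib

section
/- (Zhang's inequality, pointwise form at a single point) Let η ∈ [0, 1] and define the inner classification risk C_class(η, t) := η·1_{sign t = -1} + (1-η)·1_{sign t = 1} and the inner hinge risk C_hinge(η, t) := η·max{0, 1-t} + (1-η)·max{0, 1+t}. Then for every t ∈ ℝ, the excess classification risk C_class(η, t) - inf_s C_class(η, s) is at most the excess hinge risk C_hinge(η, t) - inf_s C_hinge(η, s). -/
/-- sign with sign 0 := 1 -/
noncomputable def sgn (t : ℝ) : ℝ := if 0 ≤ t then 1 else -1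

/-- inner classification risk -/
noncomputable def Cclass (η t : ℝ) : ℝ :=
  η * (if sgn t = -1 then 1 else 0) + (1 - η) * (if sgn t = 1 then 1 else 0)

/-- inner hinge risk -/
noncomputable def Chinge (η t : ℝ) : ℝ :=
  η * max 0 (1 - t) + (1 - η) * max 0 (1 + t)

lemma Cclass_eval (η t : ℝ) : Cclass η t = if 0 ≤ t then 1 - η else η := by
  unfold Cclass sgn
  split <;> norm_num

lemma inf_Cclass (η : ℝ) (hη : η ∈ Set.Icc (0:ℝ) 1) :
    ⨅ s : ℝ, Cclass η s = min η (1 - η) := by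
  obtain ⟨h0, h1⟩ := hη
  have hb : BddBelow (Set.range fun s => Cclass η s) := by
    refine ⟨0, ?_⟩
    rintro x ⟨s, rfl⟩
    show (0:ℝ) ≤ Cclass η s
    rw [Cclass_eval]; split <;> linarith
  apply le_antisymm
  · apply le_min
    · calc ⨅ s : ℝ, Cclass η s ≤ Cclass η (-1) := ciInf_le hb (-1)
        _ = η := by rw [Cclass_eval]; norm_num
    · calc ⨅ s : ℝ, Cclass η s ≤ Cclass η 0 := ciInf_le hb 0
        _ = 1 - η := by rw [Cclass_eval]; norm_num
  · apply le_ciInf; intro s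
    rw [Cclass_eval]; split
    · exact min_le_right _ _
    · exact min_le_left _ _

lemma Chinge_key (η : ℝ) (h0 : 0 ≤ η) (h1 : η ≤ 1) (s : ℝ) :
    2 * min η (1 - η) ≤ Chinge η s := by
  unfold Chinge
  have h1s : 1 - s ≤ max 0 (1 - s) := le_max_right _ _
  have h2s : 1 + s ≤ max 0 (1 + s) := le_max_right _ _
  have h1s' : (0:ℝ) ≤ max 0 (1 - s) := le_max_left _ _
  have h2s' : (0:ℝ) ≤ max 0 (1 + s) := le_max_left _ _
  have hm1 : min η (1 - η) ≤ η := min_le_left _ _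
  have hm2 : min η (1 - η) ≤ 1 - η := min_le_right _ _
  have hm0 : 0 ≤ min η (1 - η) := le_min h0 (by linarith)
  calc 2 * min η (1 - η) = min η (1 - η) * ((1 - s) + (1 + s)) := by ring
    _ ≤ min η (1 - η) * (max 0 (1 - s) + max 0 (1 + s)) := by
        apply mul_le_mul_of_nonneg_left (by linarith) hm0
    _ = min η (1 - η) * max 0 (1 - s) + min η (1 - η) * max 0 (1 + s) := by ring
    _ ≤ η * max 0 (1 - s) + (1 - η) * max 0 (1 + s) := by
        apply add_le_add <;> apply mul_le_mul_of_nonneg_right <;> assumption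

lemma inf_Chinge (η : ℝ) (hη : η ∈ Set.Icc (0:ℝ) 1) :
    ⨅ s : ℝ, Chinge η s = 2 * min η (1 - η) := by
  obtain ⟨h0, h1⟩ := hη
  have hb : BddBelow (Set.range fun s => Chinge η s) := by
    refine ⟨2 * min η (1 - η), ?_⟩
    rintro x ⟨s, rfl⟩
    exact Chinge_key η h0 h1 s
  apply le_antisymm
  · rcases le_total η (1 - η) with h | h
    · calc ⨅ s : ℝ, Chinge η s ≤ Chinge η (-1) := ciInf_le hb (-1)
        _ = 2 * min η (1 - η) := by
            unfold Chinge; rw [min_eq_left h]; norm_num; ring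
    · calc ⨅ s : ℝ, Chinge η s ≤ Chinge η 1 := ciInf_le hb 1
        _ = 2 * min η (1 - η) := by
            unfold Chinge; rw [min_eq_right h]; norm_num; ring
  · exact le_ciInf (Chinge_key η h0 h1)

theorem zhang_inequality_pointwise (η : ℝ) (hη : η ∈ Set.Icc (0 : ℝ) 1) (t : ℝ) :
    Cclass η t - ⨅ s : ℝ, Cclass η s ≤ Chinge η t - ⨅ s : ℝ, Chinge η s := by
  rw [inf_Cclass η hη, inf_Chinge η hη, Cclass_eval]
  obtain ⟨h0, h1⟩ := hη
  unfold Chinge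
  rcases lt_or_ge t 0 with ht | ht
  swap
  · rw [if_pos ht, max_eq_right (by linarith : (0:ℝ) ≤ 1 + t)]
    rcases le_total t 1 with h | h
    · rw [max_eq_right (by linarith)]
      rcases le_total η (1 - η) with hm | hm
      · rw [min_eq_left hm]; nlinarith
      · rw [min_eq_right hm]; nlinarith
    · rw [max_eq_left (by linarith)]
      rcases le_total η (1 - η) with hm | hm
      · rw [min_eq_left hm]; nlinarith
      · rw [min_eq_right hm]; nlinarith
  · rw [if_neg (not_le.mpr ht), max_eq_right (by linarith : (0:ℝ) ≤ 1 - t)]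
    rcases le_total (-1) t with h | h
    · rw [max_eq_right (by linarith)]
      rcases le_total η (1 - η) with hm | hm
      · rw [min_eq_left hm]; nlinarith
      · rw [min_eq_right hm]; nlinarith
    · rw [max_eq_left (by linarith)]
      rcases le_total η (1 - η) with hm | hm
      · rw [min_eq_left hm]; nlinarith
      · rw [min_eq_right hm]; nlinarith
end

section
/- Let P be a distribution on X × {-1, 1} with noise exponent q ∈ [0, ∞], i.e., P_X({x : |2η(x) - 1| < ε}) ≤ (c·ε)^q for all ε > 0 and some constant c > 0, where η(x) = P(y = 1 | x). Then for every measurable f : X → [-1, 1], the variance bound E_P (L_hinge ∘ f - L_hinge ∘ f*_{L,P})² ≤ V · (E_P (L_hinge ∘ f - L_hinge ∘ f*_{L,P}))^{q/(q+1)} holds with V = 6 c^{q/(q+1)}, where f*_{L,P} = sign(2η - 1) is a Bayes decision function for the hinge loss. -/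
open MeasureTheory Real

noncomputable def hingeLoss (y t : ℝ) : ℝ := max 0 (1 - y * t)

/-- Variance bound for the hinge loss under Tsybakov's noise condition. -/
theorem hinge_variance_bound
    {X : Type*} [MeasurableSpace X]
    (P : Measure (X × ℝ)) [IsProbabilityMeasure P]
    (hY : ∀ᵐ z ∂P, z.2 = 1 ∨ z.2 = -1)
    (η : X → ℝ) (hηm : Measurable η) (hη01 : ∀ x, η x ∈ Set.Icc (0 : ℝ) 1)
    (hpost : ∀ A : Set X, MeasurableSet A →
      P (A ×ˢ ({1} : Set ℝ)) = ENNReal.ofReal (∫ x in A, η x ∂(P.map Prod.fst)))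
    (q c : ℝ) (hq : 0 ≤ q) (hc : 0 < c)
    (hnoise : ∀ ε > (0 : ℝ),
      (P.map Prod.fst) {x | |2 * η x - 1| < ε} ≤ ENNReal.ofReal ((c * ε) ^ q)) :
    ∀ f : X → ℝ, Measurable f → (∀ x, f x ∈ Set.Icc (-1 : ℝ) 1) →
      (∫ z, (hingeLoss z.2 (f z.1) -
          hingeLoss z.2 (if 0 ≤ 2 * η z.1 - 1 then 1 else -1)) ^ 2 ∂P) ≤
        6 * c ^ (q / (q + 1)) *
          (∫ z, (hingeLoss z.2 (f z.1) -
            hingeLoss z.2 (if 0 ≤ 2 * η z.1 - 1 then 1 else -1)) ∂P) ^ (q / (q + 1)) := by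
  intro f hf hf1
  set PX := P.map Prod.fst with hPX
  haveI : IsProbabilityMeasure PX := Measure.isProbabilityMeasure_map measurable_fst.aemeasurable
  set g : X → ℝ := fun x => if 0 ≤ 2 * η x - 1 then 1 else -1 with hgdef
  have hgm : Measurable g := by
    apply Measurable.ite _ measurable_const measurable_const
    exact measurableSet_le measurable_const ((hηm.const_mul 2).sub_const 1)
  set s : X → ℝ := fun x => g x - f x with hsdef
  have hsm : Measurable s := hgm.sub hf
  have hg1 : ∀ x, g x = 1 ∨ g x = -1 := fun x => by
    simp only [hgdef]; split <;> simp
  have hsb : ∀ x, |s x| ≤ 2 := by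
    intro x
    have := (hf1 x).1; have := (hf1 x).2
    rcases hg1 x with h | h <;> rw [abs_le] <;> constructor <;>
      simp only [hsdef, h] <;> linarith
  -- pointwise identity for the hinge difference
  have hpt : ∀ x : X, ∀ y : ℝ, y = 1 ∨ y = -1 →
      hingeLoss y (f x) - hingeLoss y (g x) = y * s x := by
    intro x y hy
    have hfx1 := (hf1 x).1; have hfx2 := (hf1 x).2
    have hgx1 : -1 ≤ g x := by rcases hg1 x with h | h <;> rw [h] <;> norm_num
    have hgx2 : g x ≤ 1 := by rcases hg1 x with h | h <;> rw [h] <;> norm_num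
    rcases hy with h | h <;> subst h <;>
      simp only [hingeLoss, hsdef, one_mul, neg_one_mul] <;>
      rw [max_eq_right (by linarith), max_eq_right (by linarith)] <;> ring
  -- measurability / integrability of basic functions
  have hsfm : Measurable fun z : X × ℝ => s z.1 := hsm.comp measurable_fst
  have bdd_int : ∀ (μ : Measure X) [IsProbabilityMeasure μ] (φ : X → ℝ) (C : ℝ),
      Measurable φ → (∀ x, |φ x| ≤ C) → Integrable φ μ := by
    intro μ _ φ C hφ hb
    exact (integrable_const C).mono' hφ.aestronglyMeasurable (ae_of_all _ hb)
  -- the slice measure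
  have slice : (P.restrict (Set.univ ×ˢ ({1} : Set ℝ))).map Prod.fst
      = PX.withDensity (fun x => ENNReal.ofReal (η x)) := by
    ext A hA
    rw [Measure.map_apply measurable_fst hA,
      Measure.restrict_apply (measurable_fst hA), withDensity_apply _ hA]
    have hset : Prod.fst ⁻¹' A ∩ (Set.univ ×ˢ ({1} : Set ℝ)) = A ×ˢ ({1} : Set ℝ) := by
      ext ⟨x, y⟩
      simp only [Set.mem_inter_iff, Set.mem_preimage, Set.mem_prod, Set.mem_univ,
        Set.mem_singleton_iff, true_and]
    rw [hset, hpost A hA,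
      ofReal_integral_eq_lintegral_ofReal
        ((bdd_int PX η 1 hηm (fun x => abs_le.2 ⟨by linarith [(hη01 x).1], (hη01 x).2⟩)).integrableOn)
        (ae_of_all _ fun x => (hη01 x).1)]
  -- Identity (i): the squared integral
  have idsq : (∫ z, (hingeLoss z.2 (f z.1) - hingeLoss z.2 (g z.1)) ^ 2 ∂P)
      = ∫ x, s x ^ 2 ∂PX := by
    have h1 : (∫ z, (hingeLoss z.2 (f z.1) - hingeLoss z.2 (g z.1)) ^ 2 ∂P)
        = ∫ z, s z.1 ^ 2 ∂P := by
      apply integral_congr_ae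
      filter_upwards [hY] with z hz
      rw [hpt z.1 z.2 hz]
      rcases hz with h | h <;> rw [h] <;> ring
    rw [h1, hPX, integral_map measurable_fst.aemeasurable]
    exact (hsm.pow_const 2).aestronglyMeasurable
  -- Identity (ii): the first-moment integral
  have hS : MeasurableSet ((Set.univ : Set X) ×ˢ ({1} : Set ℝ)) :=
    MeasurableSet.univ.prod (measurableSet_singleton 1)
  have hint_sfst : Integrable (fun z : X × ℝ => s z.1) P :=
    (integrable_const 2).mono' hsfm.aestronglyMeasurable (ae_of_all _ fun z => hsb z.1)
  have idmean : (∫ z, (hingeLoss z.2 (f z.1) - hingeLoss z.2 (g z.1)) ∂P)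
      = ∫ x, (2 * η x - 1) * s x ∂PX := by
    have h1 : (∫ z, (hingeLoss z.2 (f z.1) - hingeLoss z.2 (g z.1)) ∂P)
        = ∫ z, (2 * (Set.univ ×ˢ ({1} : Set ℝ)).indicator (fun z : X × ℝ => s z.1) z
            - s z.1) ∂P := by
      apply integral_congr_ae
      filter_upwards [hY] with z hz
      rw [hpt z.1 z.2 hz]
      rcases hz with h | h
      · have hz1 : z ∈ (Set.univ : Set X) ×ˢ ({1} : Set ℝ) := ⟨Set.mem_univ _, h⟩
        rw [Set.indicator_of_mem hz1, h]; ring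
      · have hz1 : z ∉ (Set.univ : Set X) ×ˢ ({1} : Set ℝ) := by
          intro hmem
          have h2 : z.2 = 1 := hmem.2
          rw [h] at h2; norm_num at h2
        rw [Set.indicator_of_notMem hz1, h]; ring
    have hind : Integrable
        ((Set.univ ×ˢ ({1} : Set ℝ)).indicator (fun z : X × ℝ => s z.1)) P :=
      hint_sfst.indicator hS
    have h2 : (∫ z, (2 * (Set.univ ×ˢ ({1} : Set ℝ)).indicator (fun z : X × ℝ => s z.1) z
            - s z.1) ∂P)
        = 2 * (∫ z in Set.univ ×ˢ ({1} : Set ℝ), s z.1 ∂P) - ∫ z, s z.1 ∂P := by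
      rw [integral_sub (hind.const_mul 2) hint_sfst, integral_const_mul,
        integral_indicator hS]
    have h3 : (∫ z in Set.univ ×ˢ ({1} : Set ℝ), s z.1 ∂P) = ∫ x, η x * s x ∂PX := by
      have := integral_map (μ := P.restrict (Set.univ ×ˢ ({1} : Set ℝ)))
        measurable_fst.aemeasurable (f := s)
        (hsm.aestronglyMeasurable)
      rw [← this, slice,
        show (fun x => ENNReal.ofReal (η x)) = (fun x => ((η x).toNNReal : ENNReal)) from rfl,
        integral_withDensity_eq_integral_smul hηm.real_toNNReal]
      apply integral_congr_ae; apply ae_of_all; intro x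
      simp [NNReal.smul_def, Real.coe_toNNReal _ (hη01 x).1]
    have h4 : (∫ z, s z.1 ∂P) = ∫ x, s x ∂PX := by
      rw [hPX, integral_map measurable_fst.aemeasurable hsm.aestronglyMeasurable]
    have hηs : Integrable (fun x => η x * s x) PX :=
      bdd_int PX _ 2 (hηm.mul hsm) (fun x => by
        rw [abs_mul]
        calc |η x| * |s x| ≤ 1 * 2 := by
              apply mul_le_mul _ (hsb x) (abs_nonneg _) zero_le_one
              rw [abs_le]; exact ⟨by linarith [(hη01 x).1], (hη01 x).2⟩
          _ = 2 := one_mul 2)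
    have hsint : Integrable s PX := bdd_int PX s 2 hsm hsb
    rw [h1, h2, h3, h4, ← integral_const_mul, ← integral_sub (hηs.const_mul 2) hsint]
    apply integral_congr_ae; apply ae_of_all; intro x; ring
  have hgeq : ∀ x, (if 0 ≤ 2 * η x - 1 then (1 : ℝ) else -1) = g x := fun _ => rfl
  simp only [hgeq]
  rw [idsq, idmean]
  -- Now work entirely on PX.
  set A := ∫ x, (2 * η x - 1) * s x ∂PX with hA
  set B := ∫ x, s x ^ 2 ∂PX with hB
  -- key sign fact
  have hsign : ∀ x, (2 * η x - 1) * s x = |2 * η x - 1| * |s x| := by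
    intro x
    by_cases h : 0 ≤ 2 * η x - 1
    · have hg : g x = 1 := by simp only [hgdef]; rw [if_pos h]
      have hs0 : 0 ≤ s x := by simp only [hsdef, hg]; linarith [(hf1 x).2]
      rw [abs_of_nonneg h, abs_of_nonneg hs0]
    · push_neg at h
      have hg : g x = -1 := by simp only [hgdef]; rw [if_neg (not_le.2 h)]
      have hs0 : s x ≤ 0 := by simp only [hsdef, hg]; linarith [(hf1 x).1]
      rw [abs_of_neg h, abs_of_nonpos hs0]; ring
  have hApos : 0 ≤ A := by
    apply integral_nonneg; intro x
    show (0 : ℝ) ≤ (2 * η x - 1) * s x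
    rw [hsign x]; positivity
  have hintB : Integrable (fun x => s x ^ 2) PX :=
    bdd_int PX _ 4 (hsm.pow_const 2) (fun x => by
      rw [abs_le]; constructor <;> nlinarith [hsb x, abs_nonneg (s x), sq_abs (s x)])
  have hintA : Integrable (fun x => (2 * η x - 1) * s x) PX :=
    bdd_int PX _ 2 (((hηm.const_mul 2).sub_const 1).mul hsm) (fun x => by
      rw [hsign x, abs_of_nonneg (by positivity)]
      have h1 : |2 * η x - 1| ≤ 1 := by
        rw [abs_le]; constructor <;> linarith [(hη01 x).1, (hη01 x).2]
      calc |2 * η x - 1| * |s x| ≤ 1 * 2 :=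
            mul_le_mul h1 (hsb x) (abs_nonneg _) zero_le_one
        _ = 2 := one_mul 2)
  have hrm : Measurable fun x => |2 * η x - 1| := ((hηm.const_mul 2).sub_const 1).abs
  -- key estimate
  have key : ∀ t : ℝ, 0 < t → B ≤ 4 * (c * t) ^ q + (2 / t) * A := by
    intro t ht
    set U := {x | |2 * η x - 1| < t} with hU
    have hUm : MeasurableSet U := measurableSet_lt hrm measurable_const
    have hsplit : B = (∫ x in U, s x ^ 2 ∂PX) + ∫ x in Uᶜ, s x ^ 2 ∂PX :=
      (integral_add_compl hUm hintB).symm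
    have part1 : (∫ x in U, s x ^ 2 ∂PX) ≤ 4 * (c * t) ^ q := by
      have h1 : (∫ x in U, s x ^ 2 ∂PX) ≤ ∫ x in U, (4 : ℝ) ∂PX := by
        apply setIntegral_mono_on hintB.integrableOn (integrable_const 4).integrableOn hUm
        intro x _
        nlinarith [hsb x, abs_nonneg (s x), sq_abs (s x)]
      have h2 : (∫ x in U, (4 : ℝ) ∂PX) = (PX U).toReal * 4 := by
        rw [setIntegral_const]; simp [mul_comm]; rfl
      have h3 : (PX U).toReal ≤ (c * t) ^ q :=
        ENNReal.toReal_le_of_le_ofReal (rpow_nonneg (by positivity) q) (hnoise t ht)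
      calc (∫ x in U, s x ^ 2 ∂PX) ≤ (PX U).toReal * 4 := h2 ▸ h1
        _ ≤ (c * t) ^ q * 4 := by
            exact mul_le_mul_of_nonneg_right h3 (by norm_num)
        _ = 4 * (c * t) ^ q := by ring
    have part2 : (∫ x in Uᶜ, s x ^ 2 ∂PX) ≤ (2 / t) * A := by
      have h1 : (∫ x in Uᶜ, s x ^ 2 ∂PX)
          ≤ ∫ x in Uᶜ, (2 / t) * ((2 * η x - 1) * s x) ∂PX := by
        apply setIntegral_mono_on hintB.integrableOn
          ((hintA.const_mul (2 / t)).integrableOn) hUm.compl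
        intro x hx
        show s x ^ 2 ≤ 2 / t * ((2 * η x - 1) * s x)
        have hxr : t ≤ |2 * η x - 1| := not_lt.1 hx
        rw [hsign x]
        have h2s : s x ^ 2 ≤ 2 * |s x| := by
          nlinarith [hsb x, abs_nonneg (s x), sq_abs (s x)]
        have : 2 * |s x| ≤ 2 / t * (|2 * η x - 1| * |s x|) := by
          rw [div_mul_eq_mul_div, le_div_iff₀ ht]
          nlinarith [abs_nonneg (s x), mul_le_mul_of_nonneg_left hxr (abs_nonneg (s x))]
        exact le_trans h2s this
      have h2 : (∫ x in Uᶜ, (2 / t) * ((2 * η x - 1) * s x) ∂PX)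
          ≤ ∫ x, (2 / t) * ((2 * η x - 1) * s x) ∂PX := by
        apply setIntegral_le_integral (hintA.const_mul (2 / t))
        apply ae_of_all; intro x
        show (0 : ℝ) ≤ 2 / t * ((2 * η x - 1) * s x)
        rw [hsign x]; positivity
      calc (∫ x in Uᶜ, s x ^ 2 ∂PX)
          ≤ ∫ x in Uᶜ, (2 / t) * ((2 * η x - 1) * s x) ∂PX := h1
        _ ≤ ∫ x, (2 / t) * ((2 * η x - 1) * s x) ∂PX := h2
        _ = (2 / t) * ∫ x, (2 * η x - 1) * s x ∂PX := integral_const_mul _ _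
        _ = (2 / t) * A := by rw [hA]
    rw [hsplit]; linarith
  -- conclude via optimization over t
  rcases eq_or_lt_of_le hq with hq0 | hq0
  · -- q = 0
    have hexp : q / (q + 1) = 0 := by rw [← hq0]; norm_num
    rw [hexp, rpow_zero, rpow_zero]
    have hB4 : B ≤ 4 := by
      have h1 : B ≤ ∫ _x, (4 : ℝ) ∂PX := by
        apply integral_mono hintB (integrable_const 4)
        intro x
        show s x ^ 2 ≤ (4 : ℝ)
        nlinarith [hsb x, abs_nonneg (s x), sq_abs (s x)]
      simpa using h1
    norm_num
    linarith
  · rcases eq_or_lt_of_le hApos with hA0 | hA0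
    · -- A = 0, q > 0
      have hBle : B ≤ 0 := by
        apply le_of_forall_pos_le_add
        intro δ hδ
        set ε := (δ / 4) ^ (1 / q) / c with hε
        have hε0 : 0 < ε := by positivity
        have := key ε hε0
        have hce : c * ε = (δ / 4) ^ (1 / q) := by
          rw [hε]; field_simp
        have hcε : (c * ε) ^ q = δ / 4 := by
          rw [hce, ← rpow_mul (by positivity : (0:ℝ) ≤ δ / 4), one_div,
            inv_mul_cancel₀ (ne_of_gt hq0), rpow_one]
        rw [hcε, ← hA0] at this
        simpa using this.trans (by linarith)
      have hp : 0 < q / (q + 1) := by positivity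
      rw [← hA0, zero_rpow (ne_of_gt hp)]
      simpa using hBle
    · -- A > 0
      set p := q / (q + 1) with hp
      have hq1 : (0:ℝ) < q + 1 := by linarith
      have hq1' : q + 1 ≠ 0 := ne_of_gt hq1
      set t := c ^ (-p) * A ^ (1 / (q + 1)) with ht
      have ht0 : 0 < t := by positivity
      have e0 : c * c ^ (-p) = c ^ (1 / (q + 1)) := by
        nth_rewrite 1 [← rpow_one c]
        rw [← rpow_add hc]
        congr 1
        rw [hp]; field_simp; ring
      have e3 : c * t = (c * A) ^ (1 / (q + 1)) := by
        calc c * t = (c * c ^ (-p)) * A ^ (1 / (q + 1)) := by rw [ht]; ring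
          _ = c ^ (1 / (q + 1)) * A ^ (1 / (q + 1)) := by rw [e0]
          _ = (c * A) ^ (1 / (q + 1)) := (mul_rpow hc.le hA0.le).symm
      have e4 : (c * t) ^ q = c ^ p * A ^ p := by
        rw [e3, ← rpow_mul (mul_nonneg hc.le hA0.le),
          show 1 / (q + 1) * q = p by rw [hp]; ring,
          mul_rpow hc.le hA0.le]
      have e1 : c ^ (-p) * c ^ p = 1 := by
        rw [← rpow_add hc]; simp
      have e2 : A ^ (1 / (q + 1)) * A ^ p = A := by
        rw [← rpow_add hA0, show 1 / (q + 1) + p = 1 by rw [hp]; field_simp; ring, rpow_one]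
      have h2 : t * (c ^ p * A ^ p) = A := by
        calc t * (c ^ p * A ^ p)
            = (c ^ (-p) * c ^ p) * (A ^ (1 / (q + 1)) * A ^ p) := by rw [ht]; ring
          _ = A := by rw [e1, e2, one_mul]
      have h2div : 2 / t * A = 2 * (c ^ p * A ^ p) := by
        rw [div_mul_eq_mul_div, div_eq_iff (ne_of_gt ht0)]
        linear_combination (-2 : ℝ) * h2
      calc B ≤ 4 * (c * t) ^ q + (2 / t) * A := key t ht0
        _ = 6 * c ^ p * A ^ p := by rw [e4, h2div]; ring
end
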